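/- arXiv:2503.17433 — 3 statements merged into one kernel-verified Lean document; each statement's English description precedes it below -/
import Mathlib

section
/- Let (P,≤,*) be a relatively pseudocomplemented poset satisfying the Ascending Chain Condition, and define the ternary operator T(x,y,z) := Max L((x*y)*z, (z*y)*x) on P. Then T is a Malcev operator: T(a,a,c) = {c} and T(a,c,c) = {a} for all a,c ∈ P. -/
/- Common definitions for congruences on posets. -/

variable {P : Type*}

/-- The set of maximal elements of `A`. -/
def MaxEl [PartialOrder P] (A : Set P) : Set P := {x ∈ A | ∀ y ∈ A, x ≤ y → x = y}

/-- The set of minimal elements of `A`. -/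
def MinEl [PartialOrder P] (A : Set P) : Set P := {x ∈ A | ∀ y ∈ A, y ≤ x → x = y}

/-- `Max L(a,b)`: the maximal elements of the set of lower bounds of `{a, b}`. -/
def MaxL [PartialOrder P] (a b : P) : Set P := MaxEl (lowerBounds {a, b})

/-- `Min U(a,b)`: the minimal elements of the set of upper bounds of `{a, b}`. -/
def MinU [PartialOrder P] (a b : P) : Set P := MinEl (upperBounds {a, b})

/-- Compatibility of a binary relation `R` with a binary operator `Q : P × P → 2^P`. -/
def Compat (R : P → P → Prop) (Q : P → P → Set P) : Prop :=
  ∀ a₁ b₁ a₂ b₂ : P, R a₁ b₁ → R a₂ b₂ → ∃ a ∈ Q a₁ a₂, ∃ b ∈ Q b₁ b₂, R a b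

/-- A congruence on a poset: an equivalence relation compatible with `Max L` and `Min U`. -/
def IsCong [PartialOrder P] (R : P → P → Prop) : Prop :=
  Equivalence R ∧ Compat R MaxL ∧ Compat R MinU

/-- The class `[a]Θ` of the relation `Θ`. -/
def cls (R : P → P → Prop) (a : P) : Set P := {x | R a x}


lemma maxEl_eq_singleton [PartialOrder P] {A : Set P} {b : P} (hb : b ∈ A)
    (hmax : ∀ x ∈ A, x ≤ b) : MaxEl A = {b} := by
  ext x
  simp only [MaxEl, Set.mem_setOf_eq, Set.mem_singleton_iff]
  constructor
  · rintro ⟨hx, hm⟩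
    exact hm b hb (hmax x hx)
  · rintro rfl
    exact ⟨hb, fun y hy hby => le_antisymm hby (hmax y hy)⟩

lemma maxL_of_le [PartialOrder P] {d b : P} (h : b ≤ d) : MaxL d b = {b} := by
  apply maxEl_eq_singleton
  · intro y hy; rcases hy with rfl | rfl
    · exact h
    · exact le_refl _
  · intro x hx; exact hx (by simp)

lemma maxL_of_le' [PartialOrder P] {d b : P} (h : b ≤ d) : MaxL b d = {b} := by
  apply maxEl_eq_singleton
  · intro y hy; rcases hy with rfl | rfl
    · exact le_refl _
    · exact h
  · intro x hx; exact hx (by simp)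

theorem stmt10 [PartialOrder P] (hACC : ¬ ∃ f : ℕ → P, StrictMono f)
    (s : P → P → P)
    (hs : ∀ x y : P, IsGreatest {z : P | lowerBounds {x, z} ⊆ lowerBounds {y}} (s x y)) :
    ∀ a c : P,
      MaxL (s (s a a) c) (s (s c a) a) = {c} ∧
      MaxL (s (s a c) c) (s (s c c) a) = {a} := by
  -- s x x is a top element
  have htop : ∀ x z : P, z ≤ s x x := by
    intro x z
    apply (hs x x).2
    intro w hw u hu
    rcases hu with rfl
    exact hw (by simp)
  -- s (s x x) c = c
  have hsc : ∀ x c : P, s (s x x) c = c := by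
    intro x c
    have hmem : s (s x x) c ∈ lowerBounds {s x x, s (s x x) c} := by
      intro y hy; rcases hy with rfl | rfl
      · exact htop _ _
      · exact le_refl _
    have h1 : s (s x x) c ≤ c := (hs (s x x) c).1 hmem (by simp)
    have h2 : c ≤ s (s x x) c := by
      apply (hs (s x x) c).2
      intro w hw u hu
      rcases hu with rfl
      exact hw (by simp)
    exact le_antisymm h1 h2
  -- x ≤ s (s x y) y
  have hkey : ∀ x y : P, x ≤ s (s x y) y := by
    intro x y
    apply (hs (s x y) y).2
    intro w hw
    have hpair : w ∈ lowerBounds {x, s x y} := by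
      rintro v (rfl | rfl)
      · exact hw (by simp)
      · exact hw (by simp)
    exact (hs x y).1 hpair
  intro a c
  constructor
  · rw [hsc a c]
    exact maxL_of_le' (hkey c a)
  · rw [hsc c a]
    exact maxL_of_le (hkey a c)
end

section
/- Let (P,≤,',0,1) be a Boolean poset and a ∈ P. (i) If there exists b ∈ P such that for every c ∈ Max L(a,b) there exists d ∈ U({c}) with d ∉ [a,1] and Min U(b,d) = {1}, then [a,1] is not the kernel of any congruence on (P,≤,',0,1). (ii) If there exists b ∈ P such that for every c ∈ Min U(a',b) there exists d ∈ U({b}) with d ∉ [a,1] and Min U(c,d) = {1}, then [a,1] is not the kernel of any congruence on (P,≤,',0,1). -/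
/- Common definitions for congruences on posets. -/

variable {P : Type*}

lemma minU_of_le [PartialOrder P] {x d y : P} (h : x ≤ d) (hy : y ∈ MinU x d) : y = d := by
  have hd : d ∈ upperBounds ({x, d} : Set P) := by
    intro z hz; rcases hz with rfl | rfl; exact h; exact le_refl _
  exact hy.2 d hd (hy.1 (by simp))

lemma maxL_top [PartialOrder P] [OrderTop P] {b y : P} (hy : y ∈ MaxL (⊤ : P) b) : y = b := by
  have hb : b ∈ lowerBounds ({(⊤ : P), b} : Set P) := by
    intro z hz; rcases hz with rfl | rfl; exact le_top; exact le_refl _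
  exact hy.2 b hb (hy.1 (by simp))

lemma minU_bot [PartialOrder P] [OrderBot P] {b y : P} (hy : y ∈ MinU (⊥ : P) b) : y = b := by
  have hb : b ∈ upperBounds ({(⊥ : P), b} : Set P) := by
    intro z hz; rcases hz with rfl | rfl; exact bot_le; exact le_refl _
  exact hy.2 b hb (hy.1 (by simp))

theorem stmt16 [PartialOrder P] [BoundedOrder P] (c : P → P)
    (hcompl : ∀ x : P, upperBounds {x, c x} = {(⊤ : P)} ∧ lowerBounds {x, c x} = {(⊥ : P)})
    (hdist : ∀ x y z : P, lowerBounds (upperBounds {x, y} ∪ {z}) =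
      lowerBounds (upperBounds (lowerBounds {x, z} ∪ lowerBounds {y, z})))
    (a : P) :
    ((∃ b : P, ∀ x ∈ MaxL a b, ∃ d ∈ upperBounds {x},
        d ∉ Set.Icc a (⊤ : P) ∧ MinU b d = {(⊤ : P)}) →
      ¬ ∃ Θ : P → P → Prop, (IsCong Θ ∧ ∀ u v : P, Θ u v → Θ (c u) (c v)) ∧
        cls Θ (⊤ : P) = Set.Icc a (⊤ : P)) ∧
    ((∃ b : P, ∀ x ∈ MinU (c a) b, ∃ d ∈ upperBounds {b},
        d ∉ Set.Icc a (⊤ : P) ∧ MinU x d = {(⊤ : P)}) →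
      ¬ ∃ Θ : P → P → Prop, (IsCong Θ ∧ ∀ u v : P, Θ u v → Θ (c u) (c v)) ∧
        cls Θ (⊤ : P) = Set.Icc a (⊤ : P)) := by
  constructor
  · rintro ⟨b, hb⟩ ⟨Θ, ⟨⟨heq, hML, hMU⟩, -⟩, hker⟩
    have hTa : Θ a ⊤ := heq.symm (by
      have : a ∈ Set.Icc a (⊤ : P) := ⟨le_refl _, le_top⟩
      rw [← hker] at this; exact this)
    obtain ⟨x, hx, y, hy, hxy⟩ := hML a ⊤ b b hTa (heq.refl b)
    have hyb : y = b := maxL_top hy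
    subst hyb
    obtain ⟨d, hd, hdI, hdU⟩ := hb x hx
    have hxd : x ≤ d := hd (by simp)
    obtain ⟨u, hu, v, hv, huv⟩ := hMU x y d d hxy (heq.refl d)
    have hud : u = d := minU_of_le hxd hu
    rw [hdU] at hv
    subst hud; subst hv
    exact hdI (by rw [← hker]; exact heq.symm huv)
  · rintro ⟨b, hb⟩ ⟨Θ, ⟨⟨heq, hML, hMU⟩, hc⟩, hker⟩
    have hTa : Θ ⊤ a := by
      have : a ∈ Set.Icc a (⊤ : P) := ⟨le_refl _, le_top⟩
      rw [← hker] at this; exact this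
    have hctop : c (⊤ : P) = ⊥ := by
      have h1 := (hcompl ⊤).2
      have : c (⊤ : P) ∈ lowerBounds ({(⊤ : P), c ⊤} : Set P) := by
        intro z hz; rcases hz with rfl | rfl; exact le_top; exact le_refl _
      rw [h1] at this; exact this
    have hca : Θ (c a) ⊥ := by
      have := hc ⊤ a hTa; rw [hctop] at this; exact heq.symm this
    obtain ⟨x, hx, y, hy, hxy⟩ := hMU (c a) (⊥ : P) b b hca (heq.refl b)
    have hyb : y = b := minU_bot hy
    rw [hyb] at hxy
    obtain ⟨d, hd, hdI, hdU⟩ := hb x hx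
    have hbd : b ≤ d := hd (by simp)
    obtain ⟨u, hu, v, hv, huv⟩ := hMU x b d d hxy (heq.refl d)
    have hvd : v = d := minU_of_le hbd hv
    rw [hdU] at hu
    subst hvd; subst hu
    exact hdI (by rw [← hker]; exact huv)
end

section
/- Let (P,≤,',0,1) be a Boolean poset and Θ, Φ congruences on (P,≤,',0,1). Assume that for each Ψ ∈ {Θ,Φ} and each (x,y) ∈ Ψ with x ≤ y one has L(U({x,y'})) ∩ [1]Ψ ≠ ∅. If [1]Θ = [1]Φ, then Θ = Φ. -/
/- Common definitions for congruences on posets. -/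

variable {P : Type*}

section Aux

variable [PartialOrder P]

private lemma lb_pair_le {a b : P} (h : a ≤ b) : lowerBounds {a, b} = Set.Iic a := by
  ext z
  constructor
  · intro hz; exact hz (Set.mem_insert a {b})
  · intro hz w hw
    rcases hw with rfl | hw
    · exact hz
    · exact le_trans hz (Set.mem_singleton_iff.mp hw ▸ h)

private lemma ub_pair_le {a b : P} (h : a ≤ b) : upperBounds {a, b} = Set.Ici b := by
  ext z
  constructor
  · intro hz; exact hz (Set.mem_insert_of_mem a rfl)
  · intro hz w hw
    rcases hw with rfl | hw
    · exact le_trans h hz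
    · exact le_trans (le_of_eq (Set.mem_singleton_iff.mp hw)) hz

private lemma maxEl_Iic (a : P) : MaxEl (Set.Iic a) = {a} := by
  ext x
  simp only [MaxEl, Set.mem_setOf_eq, Set.mem_Iic, Set.mem_singleton_iff]
  constructor
  · rintro ⟨h1, h2⟩; exact h2 a le_rfl h1
  · rintro rfl; exact ⟨le_rfl, fun y hy hxy => le_antisymm hxy hy⟩

private lemma minEl_Ici (a : P) : MinEl (Set.Ici a) = {a} := by
  ext x
  simp only [MinEl, Set.mem_setOf_eq, Set.mem_Ici, Set.mem_singleton_iff]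
  constructor
  · rintro ⟨h1, h2⟩; exact h2 a le_rfl h1
  · rintro rfl; exact ⟨le_rfl, fun y hy hxy => le_antisymm hy hxy⟩

private lemma maxL_le {a b : P} (h : a ≤ b) : MaxL a b = {a} := by
  rw [MaxL, lb_pair_le h, maxEl_Iic]

private lemma maxL_ge {a b : P} (h : b ≤ a) : MaxL a b = {b} := by
  rw [MaxL, Set.pair_comm, lb_pair_le h, maxEl_Iic]

private lemma minU_le {a b : P} (h : a ≤ b) : MinU a b = {b} := by
  rw [MinU, ub_pair_le h, minEl_Ici]

private lemma minU_ge {a b : P} (h : b ≤ a) : MinU a b = {a} := by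
  rw [MinU, Set.pair_comm, ub_pair_le h, minEl_Ici]

private lemma lb_Ici (a : P) : lowerBounds (Set.Ici a) = Set.Iic a := by
  ext z
  constructor
  · intro hz; exact hz (le_refl a)
  · intro hz w hw; exact le_trans hz hw

private lemma ub_Iic (a : P) : upperBounds (Set.Iic a) = Set.Ici a := by
  ext z
  constructor
  · intro hz; exact hz (le_refl a)
  · intro hz w hw; exact le_trans hw hz

end Aux

section Key

variable [PartialOrder P] [BoundedOrder P]

/-- Key lemma: for a comparable Θ-pair, condition (2) for Θ plus equality of kernels
forces the pair into Φ. -/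
private lemma key (c : P → P)
    (hcompl : ∀ x : P, upperBounds {x, c x} = {(⊤ : P)} ∧ lowerBounds {x, c x} = {(⊥ : P)})
    (hdist : ∀ x y z : P, lowerBounds (upperBounds {x, y} ∪ {z}) =
      lowerBounds (upperBounds (lowerBounds {x, z} ∪ lowerBounds {y, z})))
    (Θ Φ : P → P → Prop) (hΦ : IsCong Φ)
    (h2Θ : ∀ x y : P, Θ x y → x ≤ y →
      (lowerBounds (upperBounds {x, c y}) ∩ cls Θ (⊤ : P)).Nonempty)
    (hker : cls Θ (⊤ : P) = cls Φ (⊤ : P))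
    {x y : P} (hxy : Θ x y) (hle : x ≤ y) : Φ x y := by
  obtain ⟨e, he1, he2⟩ := h2Θ x y hxy hle
  rw [hker] at he2
  have heΦ : Φ (⊤ : P) e := he2
  -- distributivity computation: L(U{x, c y} ∪ {y}) = Iic x
  have hdx : lowerBounds (upperBounds {x, c y} ∪ {y}) = Set.Iic x := by
    rw [hdist x (c y) y, lb_pair_le hle, Set.pair_comm (c y) y, (hcompl y).2]
    have h1 : (Set.Iic x ∪ {(⊥ : P)}) = Set.Iic x :=
      Set.union_eq_self_of_subset_right (by
        intro z hz
        rw [Set.mem_singleton_iff.mp hz]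
        exact Set.mem_Iic.mpr bot_le)
    rw [h1, ub_Iic, lb_Ici]
  -- Compatibility with MaxL on (⊤, e) and (y, y)
  obtain ⟨p, hp, q, hq, hpq⟩ := hΦ.2.1 (⊤ : P) e y y heΦ (hΦ.1.refl y)
  rw [maxL_ge (le_top : y ≤ (⊤ : P))] at hp
  rw [Set.mem_singleton_iff.mp hp] at hpq
  -- hpq : Φ y q,  hq : q ∈ MaxL e y
  have hqx : q ≤ x := by
    have hq1 : q ∈ lowerBounds {e, y} := hq.1
    have hqe : q ≤ e := hq1 (Set.mem_insert e {y})
    have hqy : q ≤ y := hq1 (Set.mem_insert_of_mem e rfl)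
    have : q ∈ lowerBounds (upperBounds {x, c y} ∪ {y}) := by
      intro w hw
      rcases hw with hw | hw
      · exact le_trans hqe (he1 hw)
      · exact le_trans hqy (le_of_eq (Set.mem_singleton_iff.mp hw).symm)
    rw [hdx] at this
    exact this
  -- Compatibility with MinU on (q, y) and (x, x)
  obtain ⟨r, hr, s, hs, hrs⟩ := hΦ.2.2 q y x x (hΦ.1.symm hpq) (hΦ.1.refl x)
  rw [minU_le hqx] at hr
  rw [minU_ge hle] at hs
  rw [Set.mem_singleton_iff.mp hr, Set.mem_singleton_iff.mp hs] at hrs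
  exact hrs

end Key


theorem stmt19 [PartialOrder P] [BoundedOrder P] (c : P → P)
    (hcompl : ∀ x : P, upperBounds {x, c x} = {(⊤ : P)} ∧ lowerBounds {x, c x} = {(⊥ : P)})
    (hdist : ∀ x y z : P, lowerBounds (upperBounds {x, y} ∪ {z}) =
      lowerBounds (upperBounds (lowerBounds {x, z} ∪ lowerBounds {y, z})))
    (Θ Φ : P → P → Prop)
    (hΘ : IsCong Θ) (hΘc : ∀ u v : P, Θ u v → Θ (c u) (c v))
    (hΦ : IsCong Φ) (hΦc : ∀ u v : P, Φ u v → Φ (c u) (c v))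
    (h2Θ : ∀ x y : P, Θ x y → x ≤ y →
      (lowerBounds (upperBounds {x, c y}) ∩ cls Θ (⊤ : P)).Nonempty)
    (h2Φ : ∀ x y : P, Φ x y → x ≤ y →
      (lowerBounds (upperBounds {x, c y}) ∩ cls Φ (⊤ : P)).Nonempty)
    (hker : cls Θ (⊤ : P) = cls Φ (⊤ : P)) :
    Θ = Φ := by
  funext a b
  apply propext
  have main : ∀ (Ψ Ξ : P → P → Prop), IsCong Ψ → IsCong Ξ →
      (∀ x y : P, Ψ x y → x ≤ y →
        (lowerBounds (upperBounds {x, c y}) ∩ cls Ψ (⊤ : P)).Nonempty) →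
      cls Ψ (⊤ : P) = cls Ξ (⊤ : P) → ∀ u v : P, Ψ u v → Ξ u v := by
    intro Ψ Ξ hΨ hΞ h2Ψ hkerΨ u v huv
    obtain ⟨d, hd, d2, hd2, hdd2⟩ := hΨ.2.1 u v v v huv (hΨ.1.refl v)
    rw [maxL_le (le_refl v)] at hd2
    rw [Set.mem_singleton_iff.mp hd2] at hdd2
    -- hdd2 : Ψ d v, hd : d ∈ MaxL u v
    have hdu : d ≤ u := hd.1 (Set.mem_insert u {v})
    have hdv : d ≤ v := hd.1 (Set.mem_insert_of_mem u rfl)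
    have hdu' : Ψ d u := hΨ.1.trans hdd2 (hΨ.1.symm huv)
    have h1 : Ξ d u := key c hcompl hdist Ψ Ξ hΞ h2Ψ hkerΨ hdu' hdu
    have h2 : Ξ d v := key c hcompl hdist Ψ Ξ hΞ h2Ψ hkerΨ hdd2 hdv
    exact hΞ.1.trans (hΞ.1.symm h1) h2
  exact ⟨main Θ Φ hΘ hΦ h2Θ hker a b, main Φ Θ hΦ hΘ h2Φ hker.symm a b⟩
end
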